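/- The variance of Z ~ BASLG₂(α) equals π²(8400 + 17920π²α² + 10280π⁴α⁴ + 3456π⁶α⁶ + 1085π⁸α⁸)/(7·(60 + 40π²α² + 7π⁴α⁴)²). -/

import Mathlib

open Real MeasureTheory

noncomputable def C₂ (α : ℝ) : ℝ := (60 + 40 * π ^ 2 * α ^ 2 + 7 * π ^ 4 * α ^ 4) / 15

noncomputable def f (z α : ℝ) : ℝ :=
  ((1 - α * z) ^ 2 + 1) ^ 2 * Real.exp (-z) / (C₂ α * (1 + Real.exp (-z)) ^ 2)

/-!
The density `f` is the logistic density `g z = e⁻ᶻ / (1 + e⁻ᶻ)²` reweighted by the quartic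
`((1 - α z)² + 1)² / C₂ α`, so both moments of `Z` are linear combinations of the logistic
moments `m k = ∫ zᵏ g z`. These vanish for odd `k` since `g` is even. For even `k ≥ 2`, the
geometric-series expansion `g z = ∑ₙ (-1)ⁿ (n + 1) e^{-(n+1) z}` on `z > 0`, integrated
termwise, gives `m k = 2 k! η(k) = 2 k! (1 - 2¹⁻ᵏ) ζ(k)`; the values of `ζ` at `2, 4, 6` then
give `m 2 = π²/3`, `m 4 = 7π⁴/15`, `m 6 = 31π⁶/21`.
-/

open Set Filter
open scoped Nat

theorem Function.Even.integral_eq_two_mul_integral_Ioi {F : ℝ → ℝ} (hF : F.Even) :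
    ∫ x, F x = 2 * ∫ x in Ioi 0, F x := by
  rw [← integral_comp_abs]
  congr 1 with x
  rcases abs_choice x with h | h <;> rw [h]
  exact (hF x).symm

theorem Function.Odd.integral_eq_zero {E : Type*} [NormedAddCommGroup E] [NormedSpace ℝ E]
    {F : ℝ → E} (hF : F.Odd) : ∫ x, F x = 0 := by
  have h := integral_neg_eq_self F volume
  simp only [hF.eq, integral_neg] at h
  have h2 : (2 : ℝ) • ∫ x, F x = 0 := by
    rw [two_smul]; nth_rw 1 [← h]; exact neg_add_cancel _
  exact (smul_eq_zero.mp h2).resolve_left two_ne_zero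

theorem integral_Ioi_pow_mul_exp_neg_mul (k : ℕ) {c : ℝ} (hc : 0 < c) :
    ∫ z in Ioi 0, z ^ k * exp (-(c * z)) = k ! / c ^ (k + 1) := by
  have h := integral_rpow_mul_exp_neg_mul_Ioi (by positivity : (0 : ℝ) < k + 1) hc
  simp_rw [add_sub_cancel_right, rpow_natCast, Gamma_nat_eq_factorial] at h
  rw [h, ← Nat.cast_succ, rpow_natCast, div_pow, one_pow, one_div_mul_eq_div]

theorem pow_mul_exp_neg_le_factorial {x : ℝ} (hx : 0 ≤ x) (k : ℕ) :
    x ^ k * exp (-x) ≤ k ! := by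
  have h := pow_div_factorial_le_exp _ hx k
  rw [div_le_iff₀ (by positivity)] at h
  rw [exp_neg, ← div_eq_mul_inv, div_le_iff₀ (exp_pos _)]
  linarith

theorem hasSum_neg_one_pow_div_succ_pow {k : ℕ} (hk : k ≠ 0) {S : ℝ}
    (hS : HasSum (fun n : ℕ => 1 / (n : ℝ) ^ k) S) :
    HasSum (fun n : ℕ => (-1) ^ n / ((n : ℝ) + 1) ^ k) ((1 - 2 / 2 ^ k) * S) := by
  have heven : HasSum (fun m : ℕ => 1 / ((2 * m : ℕ) : ℝ) ^ k) (S / 2 ^ k) := by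
    refine (hS.div_const _).congr_fun fun m => ?_
    push_cast
    rw [mul_pow, div_div, mul_comm]
  obtain ⟨T, hodd⟩ : Summable fun m : ℕ => 1 / ((2 * m + 1 : ℕ) : ℝ) ^ k :=
    hS.summable.comp_injective fun a b h => by simpa using h
  have hST : S / 2 ^ k + T = S :=
    (HasSum.even_add_odd (f := fun n : ℕ => 1 / (n : ℝ) ^ k) heven hodd).unique hS
  have halt : HasSum (fun n : ℕ => (-1) ^ (n + 1) / (n : ℝ) ^ k) (-(S / 2 ^ k) + T) := by
    refine HasSum.even_add_odd (heven.neg.congr_fun fun m => ?_) (hodd.congr_fun fun m => ?_)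
    · rw [pow_succ, pow_mul]; ring
    · rw [pow_succ, pow_succ, pow_mul]; ring
  rw [← hasSum_nat_add_iff' 1] at halt
  simp only [Finset.range_one, Finset.sum_singleton, CharP.cast_eq_zero, zero_pow hk, div_zero,
    sub_zero] at halt
  rw [show (1 - 2 / 2 ^ k) * S = -(S / 2 ^ k) + T by linear_combination -hST]
  refine halt.congr_fun fun n => ?_
  push_cast
  ring

theorem bernoulli_six : bernoulli 6 = 1 / 42 := by
  rw [bernoulli_eq_bernoulli'_of_ne_one (by decide), show 6 = 5 + 1 from rfl, bernoulli'_def]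
  norm_num [Finset.sum_range_succ, Nat.choose, bernoulli'_four,
    bernoulli'_eq_zero_of_odd (by decide : Odd 3) (by norm_num),
    bernoulli'_eq_zero_of_odd (by decide : Odd 5) (by norm_num)]

theorem hasSum_zeta_six : HasSum (fun n : ℕ => (1 : ℝ) / (n : ℝ) ^ 6) (π ^ 6 / 945) := by
  convert hasSum_zeta_nat three_ne_zero using 1
  rw [bernoulli_six]
  norm_num [Nat.factorial]
  ring

noncomputable def logisticDensity (z : ℝ) : ℝ := exp (-z) / (1 + exp (-z)) ^ 2

theorem logisticDensity_even : logisticDensity.Even := fun z => by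
  have h : exp z = (exp (-z))⁻¹ := by rw [exp_neg, inv_inv]
  simp only [logisticDensity, neg_neg, h]
  field_simp
  ring

theorem continuous_logisticDensity : Continuous logisticDensity :=
  (continuous_exp.comp continuous_neg).div (by fun_prop) fun _ => by positivity

theorem logisticDensity_pos (z : ℝ) : 0 < logisticDensity z := by
  unfold logisticDensity; positivity

theorem logisticDensity_le_exp_neg_abs (z : ℝ) : logisticDensity z ≤ exp (-|z|) := by
  have h : logisticDensity z = logisticDensity |z| := by
    rcases abs_choice z with h | h <;> rw [h]
    exact (logisticDensity_even z).symm
  rw [h, logisticDensity]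
  exact div_le_self (exp_pos _).le (one_le_pow₀ (by linarith [exp_pos (-|z|)]))

theorem integrable_pow_mul_logisticDensity (k : ℕ) :
    Integrable fun z => z ^ k * logisticDensity z := by
  refine (integrable_inv_one_add_sq.const_mul ((k ! + (k + 2) ! : ℕ) : ℝ)).mono'
    ((continuous_pow k).mul continuous_logisticDensity).aestronglyMeasurable
    (ae_of_all _ fun z => ?_)
  rw [norm_mul, norm_pow, norm_of_nonneg (logisticDensity_pos z).le, norm_eq_abs,
    ← div_eq_mul_inv, le_div_iff₀ (by positivity)]
  calc |z| ^ k * logisticDensity z * (1 + z ^ 2)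
      ≤ |z| ^ k * exp (-|z|) * (1 + z ^ 2) := by gcongr; exact logisticDensity_le_exp_neg_abs z
    _ = |z| ^ k * exp (-|z|) + |z| ^ (k + 2) * exp (-|z|) := by rw [← sq_abs z]; ring
    _ ≤ ((k ! + (k + 2) ! : ℕ) : ℝ) := by
      push_cast
      exact add_le_add (pow_mul_exp_neg_le_factorial (abs_nonneg z) k)
        (pow_mul_exp_neg_le_factorial (abs_nonneg z) (k + 2))

theorem hasSum_logisticDensity {z : ℝ} (hz : 0 < z) :
    HasSum (fun n : ℕ => (-1) ^ n * (n + 1) * exp (-((n + 1) * z))) (logisticDensity z) := by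
  have hx : ‖-exp (-z)‖ < 1 := by
    rw [norm_neg, norm_of_nonneg (exp_pos _).le, exp_lt_one_iff]; linarith
  have h := hasSum_coe_mul_geometric_of_norm_lt_one hx
  rw [← hasSum_nat_add_iff' 1] at h
  simp only [Finset.range_one, Finset.sum_singleton, CharP.cast_eq_zero, zero_mul, sub_zero] at h
  rw [show logisticDensity z = -(-exp (-z) / (1 - -exp (-z)) ^ 2) by
    rw [logisticDensity, sub_neg_eq_add, neg_div, neg_neg]]
  refine h.neg.congr_fun fun n => ?_
  rw [neg_pow (exp (-z)), ← exp_nat_mul]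
  push_cast
  ring_nf

theorem integral_Ioi_pow_mul_logisticDensity {k : ℕ} (hk : 2 ≤ k) {S : ℝ}
    (hS : HasSum (fun n : ℕ => 1 / (n : ℝ) ^ k) S) :
    ∫ z in Ioi 0, z ^ k * logisticDensity z = k ! * ((1 - 2 / 2 ^ k) * S) := by
  let F : ℕ → ℝ → ℝ := fun n z => (-1) ^ n * (n + 1) * (z ^ k * exp (-((n + 1) * z)))
  have hF_int (n : ℕ) : ∫ z in Ioi 0, F n z = k ! * ((-1) ^ n / ((n : ℝ) + 1) ^ k) := by
    rw [integral_const_mul, integral_Ioi_pow_mul_exp_neg_mul k (by positivity)]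
    field_simp
    ring
  have hF_integrable (n : ℕ) : IntegrableOn (F n) (Ioi 0) := by
    refine (Integrable.of_integral_ne_zero ?_).const_mul _
    rw [integral_Ioi_pow_mul_exp_neg_mul k (by positivity)]
    positivity
  have hF_norm (n : ℕ) : ∫ z in Ioi 0, ‖F n z‖ = k ! / ((n : ℝ) + 1) ^ k := by
    have h : ∀ z ∈ Ioi (0 : ℝ), ‖F n z‖ = (n + 1) * (z ^ k * exp (-((n + 1) * z))) :=
      fun z (hz : 0 < z) => by
        simp only [F, norm_mul, norm_pow, norm_neg, norm_one, one_pow, one_mul,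
          norm_of_nonneg hz.le, norm_of_nonneg (exp_pos _).le,
          norm_of_nonneg (by positivity : (0 : ℝ) ≤ n + 1)]
    rw [setIntegral_congr_fun measurableSet_Ioi h, integral_const_mul,
      integral_Ioi_pow_mul_exp_neg_mul k (by positivity)]
    field_simp
    ring
  have hF_summable : Summable fun n : ℕ => ∫ z in Ioi 0, ‖F n z‖ := by
    simp_rw [hF_norm, div_eq_mul_one_div (k ! : ℝ)]
    refine Summable.mul_left _ ?_
    exact_mod_cast (summable_nat_add_iff 1).mpr (Real.summable_one_div_nat_pow.mpr hk)
  have hseries := hasSum_integral_of_summable_integral_norm hF_integrable hF_summable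
  simp_rw [hF_int] at hseries
  rw [((hasSum_neg_one_pow_div_succ_pow (by omega) hS).mul_left _).unique hseries]
  refine setIntegral_congr_fun measurableSet_Ioi fun z (hz : 0 < z) => ?_
  rw [((hasSum_logisticDensity hz).mul_left (z ^ k)).tsum_eq.symm]
  congr 1 with n
  ring

noncomputable def logisticMoment (k : ℕ) : ℝ := ∫ z, z ^ k * logisticDensity z

theorem logisticMoment_of_odd {k : ℕ} (hk : Odd k) : logisticMoment k = 0 :=
  Function.Odd.integral_eq_zero fun z => by rw [hk.neg_pow, logisticDensity_even z, neg_mul]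

theorem logisticMoment_of_even {k : ℕ} (hk : Even k) (hk₂ : 2 ≤ k) {S : ℝ}
    (hS : HasSum (fun n : ℕ => 1 / (n : ℝ) ^ k) S) :
    logisticMoment k = 2 * (k ! * ((1 - 2 / 2 ^ k) * S)) := by
  rw [logisticMoment, Function.Even.integral_eq_two_mul_integral_Ioi
    fun z => by rw [hk.neg_pow, logisticDensity_even z],
    integral_Ioi_pow_mul_logisticDensity hk₂ hS]

theorem logisticMoment_two : logisticMoment 2 = π ^ 2 / 3 := by
  rw [logisticMoment_of_even even_two le_rfl hasSum_zeta_two]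
  norm_num [Nat.factorial]
  ring

theorem logisticMoment_four : logisticMoment 4 = 7 * π ^ 4 / 15 := by
  rw [logisticMoment_of_even (by decide) (by norm_num) hasSum_zeta_four]
  norm_num [Nat.factorial]
  ring

theorem logisticMoment_six : logisticMoment 6 = 31 * π ^ 6 / 21 := by
  rw [logisticMoment_of_even (by decide) (by norm_num) hasSum_zeta_six]
  norm_num [Nat.factorial]
  ring

theorem f_eq_mul_logisticDensity (z α : ℝ) :
    f z α = ((1 - α * z) ^ 2 + 1) ^ 2 * logisticDensity z / C₂ α := by
  rw [f, logisticDensity, mul_div_assoc, mul_div_assoc, div_div, mul_comm (C₂ α)]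

theorem integral_pow_mul_f (α : ℝ) (j : ℕ) :
    ∫ z, z ^ j * f z α
      = (4 * logisticMoment j - 8 * α * logisticMoment (j + 1)
          + 8 * α ^ 2 * logisticMoment (j + 2) - 4 * α ^ 3 * logisticMoment (j + 3)
          + α ^ 4 * logisticMoment (j + 4)) / C₂ α := by
  let c : Fin 5 → ℝ := ![4, -8 * α, 8 * α ^ 2, -4 * α ^ 3, α ^ 4]
  have hf (z : ℝ) : z ^ j * f z α
      = (∑ i : Fin 5, c i * (z ^ (j + i) * logisticDensity z)) / C₂ α := by
    simp only [f_eq_mul_logisticDensity, Fin.sum_univ_five, c, Fin.isValue, Fin.coe_ofNat_eq_mod,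
      Nat.zero_mod, Nat.one_mod, Nat.reduceMod, Nat.mod_succ, add_zero, Matrix.cons_val_zero,
      Matrix.cons_val_one, Matrix.cons_val]
    ring
  simp_rw [hf]
  rw [integral_div, integral_finsetSum _ fun i _ =>
    (integrable_pow_mul_logisticDensity _).const_mul _]
  simp only [integral_const_mul, Fin.sum_univ_five, c, logisticMoment, Fin.isValue,
    Fin.coe_ofNat_eq_mod, Nat.zero_mod, Nat.one_mod, Nat.reduceMod, Nat.mod_succ, add_zero,
    Matrix.cons_val_zero, Matrix.cons_val_one, Matrix.cons_val]
  ring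

theorem BASLG2_variance (α : ℝ) :
    (∫ z : ℝ, z ^ 2 * f z α) - (∫ z : ℝ, z * f z α) ^ 2
      = π ^ 2 * (8400 + 17920 * π ^ 2 * α ^ 2 + 10280 * π ^ 4 * α ^ 4
          + 3456 * π ^ 6 * α ^ 6 + 1085 * π ^ 8 * α ^ 8)
        / (7 * (60 + 40 * π ^ 2 * α ^ 2 + 7 * π ^ 4 * α ^ 4) ^ 2) := by
  have hmean : ∫ z : ℝ, z * f z α = ∫ z : ℝ, z ^ 1 * f z α := by simp_rw [pow_one]
  rw [hmean, integral_pow_mul_f, integral_pow_mul_f]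
  simp only [Nat.reduceAdd, logisticMoment_of_odd odd_one,
    logisticMoment_of_odd (by decide : Odd 3), logisticMoment_of_odd (by decide : Odd 5),
    logisticMoment_two, logisticMoment_four, logisticMoment_six]
  have hC : 60 + 40 * π ^ 2 * α ^ 2 + 7 * π ^ 4 * α ^ 4 ≠ 0 := by positivity
  rw [C₂]
  field_simp
  ring
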